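/- arXiv:1810.12998 — 2 statements merged into one kernel-verified Lean document; each statement's English description precedes it below -/
import Mathlib

section
/- Let k be a positive integer. For every S(2k)-space X, ψ(X) ≤ 2^{s_{2k}(X)}. -/
open Cardinal Set

universe u

variable {X : Type u}

/-- `x` is S(n)-separated from `A`. -/
def SSep [TopologicalSpace X] : ℕ → X → Set X → Prop
  | 0, x, A => x ∉ closure A
  | (n+1), x, A => ∃ U : ℕ → Set X, (∀ i ≤ n, IsOpen (U i)) ∧ x ∈ U 0 ∧
      (∀ i < n, closure (U i) ⊆ U (i+1)) ∧ closure (U n) ∩ A = ∅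

/-- `X` is an S(n)-space. -/
def SSpace (n : ℕ) (X : Type u) [TopologicalSpace X] : Prop :=
  ∀ x y : X, x ≠ y → SSep n x {y}

/-- `U` is an S(2k-1)-neighborhood of `x` (for `k ≥ 1`). -/
def SOddNhd [TopologicalSpace X] (k : ℕ) (x : X) (U : Set X) : Prop :=
  ∃ V : ℕ → Set X, (∀ i < k, IsOpen (V i)) ∧ x ∈ V 0 ∧
    (∀ i, i + 1 < k → closure (V i) ⊆ V (i+1)) ∧ V (k-1) ⊆ U

/-- `U` is an S(2k)-neighborhood of `x` (for `k ≥ 1`). -/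
def SEvenNhd [TopologicalSpace X] (k : ℕ) (x : X) (U : Set X) : Prop :=
  ∃ V : ℕ → Set X, (∀ i < k, IsOpen (V i)) ∧ x ∈ V 0 ∧
    (∀ i, i + 1 < k → closure (V i) ⊆ V (i+1)) ∧ closure (V (k-1)) ⊆ U

/-- `U` is an open S(2k-1)-neighborhood of `x`. -/
def SOpenNhd [TopologicalSpace X] (k : ℕ) (x : X) (U : Set X) : Prop :=
  IsOpen U ∧ SOddNhd k x U

/-- `U` is an S(2k-1)-open set. -/
def SOpen [TopologicalSpace X] (k : ℕ) (U : Set X) : Prop :=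
  IsOpen U ∧ ∃ x, SOddNhd k x U

/-- The S(2k-1)-closure `θ_{2k-1}(A)`. -/
def thetaOdd [TopologicalSpace X] (k : ℕ) (A : Set X) : Set X :=
  {x | ∀ U : Set X, SOpenNhd k x U → (U ∩ A).Nonempty}

/-- The S(2k)-closure `θ_{2k}(A)`. -/
def thetaEven [TopologicalSpace X] (k : ℕ) (A : Set X) : Set X :=
  {x | ∀ U : Set X, SOpenNhd k x U → (closure U ∩ A).Nonempty}

/-- `D` is S(2k-1)-discrete. -/
def SOddDiscrete [TopologicalSpace X] (k : ℕ) (D : Set X) : Prop :=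
  ∀ x ∈ D, ∃ U : Set X, SOpenNhd k x U ∧ U ∩ D = {x}

/-- `D` is S(2k)-discrete. -/
def SEvenDiscrete [TopologicalSpace X] (k : ℕ) (D : Set X) : Prop :=
  ∀ x ∈ D, ∃ U : Set X, SOpenNhd k x U ∧ closure U ∩ D = {x}

/-- The S(2k-1)-spread `s_{2k-1}(X)`. -/
noncomputable def spreadOdd (k : ℕ) (X : Type u) [TopologicalSpace X] : Cardinal :=
  (⨆ D : {D : Set X // SOddDiscrete k D}, #D.1) ⊔ Cardinal.aleph0

/-- The S(2k)-spread `s_{2k}(X)`. -/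
noncomputable def spreadEven (k : ℕ) (X : Type u) [TopologicalSpace X] : Cardinal :=
  (⨆ D : {D : Set X // SEvenDiscrete k D}, #D.1) ⊔ Cardinal.aleph0

/-- The S(2k-1)-cellularity `c_{2k-1}(X)`. -/
noncomputable def cellOdd (k : ℕ) (X : Type u) [TopologicalSpace X] : Cardinal :=
  (⨆ F : {F : Set (Set X) // (∀ U ∈ F, SOpen k U ∧ U.Nonempty) ∧
      (∀ U ∈ F, ∀ V ∈ F, U ≠ V → U ∩ V = ∅)}, #F.1) ⊔ Cardinal.aleph0

/-- The S(2k)-cellularity `c_{2k}(X)`. -/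
noncomputable def cellEven (k : ℕ) (X : Type u) [TopologicalSpace X] : Cardinal :=
  (⨆ F : {F : Set (Set X) // (∀ U ∈ F, SOpen k U ∧ U.Nonempty) ∧
      (∀ U ∈ F, ∀ V ∈ F, U ≠ V → closure U ∩ closure V = ∅)}, #F.1) ⊔ Cardinal.aleph0

/-- The S(2k-1)-character `χ_{2k-1}(X)`. -/
noncomputable def charOdd (k : ℕ) (X : Type u) [TopologicalSpace X] : Cardinal :=
  sInf {c | Cardinal.aleph0 ≤ c ∧ ∀ x : X, ∃ B : Set (Set X), #B ≤ c ∧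
    (∀ U ∈ B, SOpenNhd k x U) ∧
    ∀ U : Set X, SOpenNhd k x U → ∃ V ∈ B, V ⊆ U}

/-- The S(2k)-character `χ_{2k}(X)`. -/
noncomputable def charEven (k : ℕ) (X : Type u) [TopologicalSpace X] : Cardinal :=
  sInf {c | Cardinal.aleph0 ≤ c ∧ ∀ x : X, ∃ B : Set (Set X), #B ≤ c ∧
    (∀ V ∈ B, IsClosed V ∧ SOddNhd k x V) ∧
    ∀ W : Set X, SOpenNhd k x W → ∃ V ∈ B, V ⊆ closure W}

/-- The S(2k-1)-pseudocharacter `ψ_{2k-1}(X)`. -/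
noncomputable def psiOdd (k : ℕ) (X : Type u) [TopologicalSpace X] : Cardinal :=
  sInf {c | Cardinal.aleph0 ≤ c ∧ ∀ x : X, ∃ B : Set (Set X), #B ≤ c ∧
    (∀ U ∈ B, SOpenNhd k x U) ∧ ⋂₀ B = {x}}

/-- The S(2k)-pseudocharacter `ψ_{2k}(X)`. -/
noncomputable def psiEven (k : ℕ) (X : Type u) [TopologicalSpace X] : Cardinal :=
  sInf {c | Cardinal.aleph0 ≤ c ∧ ∀ x : X, ∃ B : Set (Set X), #B ≤ c ∧
    (∀ U ∈ B, SOpenNhd k x U) ∧ (⋂ U ∈ B, closure U) = {x}}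

/-- The usual pseudocharacter `ψ(X)`. -/
noncomputable def psi (X : Type u) [TopologicalSpace X] : Cardinal :=
  sInf {c | Cardinal.aleph0 ≤ c ∧ ∀ x : X, ∃ B : Set (Set X), #B ≤ c ∧
    (∀ U ∈ B, IsOpen U) ∧ ⋂₀ B = {x}}

/-!
Let `κ = s_{2k}(X)` and suppose some `x` is not an intersection of `2^κ` open sets. Every `y ≠ x`
carries an S(2k)-chain `C_y 0 ⊆ ⋯ ⊆ C_y (2k-1)` whose closure misses `x`, and fewer than
`(2^κ)⁺` sets `(cl C_y (2k-1))ᶜ` never cut out `x`; so transfinite recursion gives points `g t`,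
`t < (2^κ)⁺`, with `g t ∉ cl C_{g s} (2k-1)` for `s < t`. Colour `s < t` by whether
`g s ∈ cl C_{g t} (k-1)`. By Erdős–Rado, `(2^κ)⁺ → (κ⁺)²₂`, some `H` of size `κ⁺` is homogeneous.
For the colour "no", `{g t | t ∈ H}` is S(2k)-discrete via the neighbourhoods `C_{g t} (k-1)`.
For the colour "yes", every `t ∈ H` with an immediate predecessor `p` in `H` is isolated by
`C_{g t} (k-1) \ cl C_{g p} k`, which is an S(2k-1)-neighbourhood because the chain of `g t` runs
upwards while the chain of `g p`, complemented, runs downwards; there are `κ⁺` such `t`.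
Either way `s_{2k}(X) > κ`.
-/

open Order

theorem WellFoundedLT.exists_seq {T Y : Type*} [Preorder T] [WellFoundedLT T] (R : Y → Y → Prop)
    (step : ∀ t : T, ∀ f : Iio t → Y, ∃ z, ∀ s, R z (f s)) :
    ∃ g : T → Y, ∀ s t, s < t → R (g t) (g s) := by
  let g : T → Y := WellFoundedLT.fix fun t prev =>
    Classical.choose (step t fun s => prev s.1 s.2)
  refine ⟨g, fun s t hst => ?_⟩
  have hg : g t = Classical.choose (step t fun s => g s.1) := WellFoundedLT.fix_eq _ t
  exact hg ▸ Classical.choose_spec (step t fun s => g s.1) ⟨s, hst⟩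

namespace Cardinal

theorem exists_lt_mk_fiber_bool {S : Type u} {κ : Cardinal.{u}} (hκ : ℵ₀ ≤ κ)
    (hS : κ < #S) (f : S → Bool) : ∃ v, κ < #(f ⁻¹' {v}) := by
  by_contra! hf
  have hunion : (f ⁻¹' {true}) ∪ f ⁻¹' {false} = Set.univ := by
    ext s; cases f s <;> simp_all
  have : #S ≤ κ := calc
    #S = #(↥((f ⁻¹' {true}) ∪ f ⁻¹' {false})) := by rw [hunion, mk_univ]
    _ ≤ κ + κ := (mk_union_le _ _).trans (add_le_add (hf true) (hf false))
    _ = κ := add_eq_self hκ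
  exact this.not_gt hS

theorem mk_sigma_Iio_arrow_bool_le {κ : Cardinal.{u}} (hκ : ℵ₀ ≤ κ) :
    #(Σ s : (succ κ).ord.ToType, Iio s → Bool) ≤ 2 ^ κ := by
  have hIio : ∀ s : (succ κ).ord.ToType, #(Iio s) ≤ κ := fun s =>
    Order.lt_succ_iff.mp (by simpa using mk_Iio_lt s)
  calc #(Σ s : (succ κ).ord.ToType, Iio s → Bool)
      = sum fun s : (succ κ).ord.ToType => 2 ^ #(Iio s) := by simp [mk_sigma]
    _ ≤ sum fun _ : (succ κ).ord.ToType => (2 : Cardinal) ^ κ :=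
      sum_le_sum _ _ fun s => power_le_power_left two_ne_zero (hIio s)
    _ = succ κ * 2 ^ κ := by simp
    _ = 2 ^ κ := mul_eq_right (hκ.trans (cantor κ).le) (Order.succ_le_of_lt (cantor κ))
        (succ_pos κ).ne'

end Cardinal

section EndHomogeneous

variable {T S : Type u} [Nonempty T] [Preorder S] [WellFoundedLT S] (c : T → T → Bool)

/-- Stage `s` picks a point other than the earlier ones that has the same colour as `a` with each
of them; the sequence is thus end-homogeneous as long as `a` itself is not picked. -/
noncomputable def endHomSeq (a : T) : S → T :=
  WellFoundedLT.fix fun s prev => Classical.epsilon fun b =>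
    ∀ s' (h : s' < s), b ≠ prev s' h ∧ c (prev s' h) b = c (prev s' h) a

def endHomCandidates (a : T) (f : S → T) (s : S) : Set T :=
  {b | ∀ s' < s, b ≠ f s' ∧ c (f s') b = c (f s') a}

theorem endHomSeq_eq (a : T) (s : S) :
    endHomSeq c a s = Classical.epsilon (· ∈ endHomCandidates c a (endHomSeq c a) s) :=
  WellFoundedLT.fix_eq _ s

theorem endHomSeq_mem {a : T} {s : S} (ha : ∀ s' < s, endHomSeq c a s' ≠ a) :
    endHomSeq c a s ∈ endHomCandidates c a (endHomSeq c a) s := by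
  rw [endHomSeq_eq]
  exact Classical.epsilon_spec ⟨a, fun s' hs' => ⟨(ha s' hs').symm, rfl⟩⟩

theorem endHomSeq_eq_of_forall_lt {a b : T} {s : S}
    (hab : ∀ s' < s, c (endHomSeq c a s') a = c (endHomSeq c b s') b) :
    endHomSeq c a s = endHomSeq c b s := by
  induction s using WellFoundedLT.induction with
  | _ s ih =>
    have hprev : ∀ s' < s, endHomSeq c a s' = endHomSeq c b s' := fun s' hs' =>
      ih s' hs' fun s'' hs'' => hab s'' (hs''.trans hs')
    rw [endHomSeq_eq, endHomSeq_eq]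
    congr 1
    ext d
    refine forall₂_congr fun s' hs' => ?_
    rw [hab s' hs', hprev s' hs']

/-- A point picked at stage `s` is determined by `s` and its colours with the earlier points. -/
theorem mk_le_of_forall_exists_endHomSeq_eq (hcap : ∀ a : T, ∃ s : S, endHomSeq c a s = a) :
    #T ≤ #(Σ s : S, Iio s → Bool) := by
  classical
  choose r hr using hcap
  refine mk_le_of_injective (f := fun a => ⟨r a, fun s' => c (endHomSeq c a s'.1) a⟩) ?_
  intro a b hab
  have hrab : r a = r b := congrArg Sigma.fst hab
  have hcol : ∀ s' < r a, c (endHomSeq c a s') a = c (endHomSeq c b s') b := by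
    intro s' hs'
    have := congrArg
      (fun p : Σ s : S, Iio s → Bool => if h : s' < p.1 then p.2 ⟨s', h⟩ else false) hab
    simpa [hs', hrab ▸ hs'] using this
  rw [← hr a, ← hr b, ← hrab]
  exact endHomSeq_eq_of_forall_lt c hcol

end EndHomogeneous

namespace Cardinal

theorem exists_pairwise_eq_of_two_power_lt {T : Type u} {κ : Cardinal.{u}} (hκ : ℵ₀ ≤ κ)
    (hT : 2 ^ κ < #T) (c : T → T → Bool) (hc : ∀ a b, c a b = c b a) :
    ∃ (v : Bool) (H : Set T), κ < #H ∧ H.Pairwise fun a b => c a b = v := by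
  have : Nonempty T := mk_ne_zero_iff.mp (zero_le.trans_lt hT).ne'
  let S := (succ κ).ord.ToType
  by_cases hcap : ∀ a : T, ∃ s : S, endHomSeq c a s = a
  · exact absurd ((mk_le_of_forall_exists_endHomSeq_eq c hcap).trans
      (mk_sigma_Iio_arrow_bool_le hκ)) hT.not_ge
  push Not at hcap
  obtain ⟨a, ha⟩ := hcap
  have hmem : ∀ s, endHomSeq c a s ∈ endHomCandidates c a (endHomSeq c a) s :=
    fun s => endHomSeq_mem c fun s' _ => ha s'
  have hinj : Function.Injective (endHomSeq c a) :=
    Function.Injective.of_lt_imp_ne fun s t hst => ((hmem t s hst).1).symm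
  obtain ⟨v, hv⟩ := exists_lt_mk_fiber_bool hκ ((mk_ord_toType (succ κ)).symm ▸ lt_succ κ)
    fun s => c (endHomSeq c a s) a
  refine ⟨v, endHomSeq c a '' ((fun s => c (endHomSeq c a s) a) ⁻¹' {v}),
    (mk_image_eq hinj).symm ▸ hv, ?_⟩
  have hend : ∀ s t, c (endHomSeq c a s) a = v → s < t →
      c (endHomSeq c a s) (endHomSeq c a t) = v := fun s t hs hst => (hmem t s hst).2.trans hs
  rintro _ ⟨s, hs, rfl⟩ _ ⟨t, ht, rfl⟩ hne
  rcases lt_or_gt_of_ne (ne_of_apply_ne _ hne) with hst | hts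
  · exact hend s t hs hst
  · exact (hc _ _).trans (hend t s ht hts)

end Cardinal

theorem exists_lt_mk_subset_forall_exists_pred {T : Type u} [LinearOrder T]
    [WellFoundedLT T] {κ : Cardinal.{u}} (hκ : ℵ₀ ≤ κ) {H : Set T} (hH : κ < #H) :
    ∃ D ⊆ H, κ < #D ∧ ∀ q ∈ D, ∃ p ∈ H, p < q ∧ ∀ r ∈ H, r < q → r ≤ p := by
  let _ : SuccOrder H := .ofLinearWellFoundedLT H
  have : Infinite H := infinite_iff.mpr (hκ.trans hH.le)
  have hmax : #({p | IsMax p} : Set H) < #H :=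
    (mk_le_one_iff_set_subsingleton.mpr fun p hp q hq => le_antisymm (hq.isTop p) (hp.isTop q)
      ).trans_lt ((one_lt_aleph0.trans_le hκ).trans hH)
  have hinj : InjOn (fun p : H => ((succ p : H) : T)) {p | IsMax p}ᶜ := fun p hp q hq hpq =>
    (succ_eq_succ_iff_of_not_isMax hp hq).mp (Subtype.ext hpq)
  refine ⟨(fun p : H => ((succ p : H) : T)) '' {p | IsMax p}ᶜ, ?_, ?_, ?_⟩
  · rintro _ ⟨p, -, rfl⟩
    exact (succ p).2
  · rwa [mk_image_eq_of_injOn _ _ hinj, mk_compl_of_infinite _ hmax]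
  · rintro _ ⟨p, hp, rfl⟩
    exact ⟨p, p.2, lt_succ_of_not_isMax hp, fun r hr hrp =>
      (lt_succ_iff_of_not_isMax (b := ⟨r, hr⟩) hp).mp hrp⟩

section SSeparation

variable [TopologicalSpace X]

theorem IsOpen.closure_compl_closure_subset {s : Set X} (hs : IsOpen s) :
    closure (closure s)ᶜ ⊆ sᶜ := by
  rw [closure_compl]
  exact compl_subset_compl.mpr hs.subset_interior_closure

/-- The chain `C 0 ⊆ ⋯ ⊆ C n` around `y` that witnesses `SSep (n + 1) y _`. -/
def IsSChain (n : ℕ) (y : X) (C : ℕ → Set X) : Prop :=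
  (∀ i ≤ n, IsOpen (C i)) ∧ y ∈ C 0 ∧ ∀ i < n, closure (C i) ⊆ C (i + 1)

variable {n : ℕ} {y : X} {C : ℕ → Set X}

theorem IsSChain.mono (hC : IsSChain n y C) {i j : ℕ} (hij : i ≤ j) (hj : j ≤ n) :
    C i ⊆ C j := by
  induction j, hij using Nat.le_induction with
  | base => exact subset_rfl
  | succ j hij ih => exact (ih (by omega)).trans (subset_closure.trans (hC.2.2 j (by omega)))

theorem IsSChain.mem (hC : IsSChain n y C) {i : ℕ} (hi : i ≤ n) : y ∈ C i :=
  hC.mono (Nat.zero_le i) hi hC.2.1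

theorem IsSChain.sOpenNhd (hC : IsSChain n y C) {k : ℕ} (hkn : k ≤ n + 1) :
    SOpenNhd k y (C (k - 1)) :=
  ⟨hC.1 _ (by omega), C, fun i hi => hC.1 i (by omega), hC.2.1,
    fun i hi => hC.2.2 i (by omega), subset_rfl⟩

theorem IsSChain.inter_compl_closure {z : X} {D : ℕ → Set X} (hC : IsSChain n y C)
    (hD : IsSChain n z D) (hy : y ∉ closure (D n)) :
    IsSChain n y fun i => C i ∩ (closure (D (n - i)))ᶜ := by
  refine ⟨fun i hi => (hC.1 i hi).inter isClosed_closure.isOpen_compl, ⟨hC.2.1, hy⟩,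
    fun i hi => ?_⟩
  have hD' : closure (D (n - (i + 1))) ⊆ D (n - i) := by
    simpa [show n - (i + 1) + 1 = n - i by omega] using hD.2.2 (n - (i + 1)) (by omega)
  refine (closure_inter_subset_inter_closure _ _).trans (inter_subset_inter (hC.2.2 i hi) ?_)
  exact (hD.1 _ (by omega)).closure_compl_closure_subset.trans (compl_subset_compl.mpr hD')

theorem SSpace.exists_isSChain {k : ℕ} (hk : 1 ≤ k) (hX : SSpace (2 * k) X) {x y : X}
    (hxy : y ≠ x) : ∃ C, IsSChain (2 * k - 1) y C ∧ x ∉ closure (C (2 * k - 1)) := by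
  obtain ⟨C, hopen, hy, hcl, hx⟩ : SSep (2 * k - 1 + 1) y {x} := by
    rw [show 2 * k - 1 + 1 = 2 * k by omega]; exact hX y x hxy
  exact ⟨C, ⟨hopen, hy, hcl⟩, fun h => notMem_empty x (hx.subset ⟨h, rfl⟩)⟩

def IsLeftSeparated {T : Type*} [LT T] (k : ℕ) (g : T → X) (C : T → ℕ → Set X) : Prop :=
  (∀ t, IsSChain (2 * k - 1) (g t) (C t)) ∧ ∀ s t, s < t → g t ∉ closure (C s (2 * k - 1))

theorem SSpace.exists_isLeftSeparated {k : ℕ} (hk : 1 ≤ k) (hX : SSpace (2 * k) X) {x : X}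
    {c : Cardinal.{u}} (hx : ∀ B : Set (Set X), #B ≤ c → (∀ U ∈ B, IsOpen U) → ⋂₀ B ≠ {x})
    {T : Type u} [LinearOrder T] [WellFoundedLT T] (hT : ∀ t : T, #(Iio t) ≤ c) :
    ∃ (g : T → X) (C : T → ℕ → Set X), IsLeftSeparated k g C := by
  choose! D hD using fun y (hy : y ≠ x) => hX.exists_isSChain hk hy
  obtain ⟨g, hg⟩ := WellFoundedLT.exists_seq (T := T) (Y := {y : X // y ≠ x})
    (fun z w => z.1 ∉ closure (D w.1 (2 * k - 1))) fun t f => by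
      set B := range fun s => (closure (D (f s).1 (2 * k - 1)))ᶜ
      have hxB : x ∈ ⋂₀ B := by
        rintro _ ⟨s, rfl⟩
        exact (hD _ (f s).2).2
      obtain ⟨z, hz, hzx⟩ : ∃ z ∈ ⋂₀ B, z ≠ x := by
        by_contra! h
        refine hx B (mk_range_le.trans (hT t)) ?_ (eq_singleton_iff_unique_mem.mpr ⟨hxB, h⟩)
        rintro _ ⟨s, rfl⟩
        exact isClosed_closure.isOpen_compl
      exact ⟨⟨z, hzx⟩, fun s => hz _ ⟨s, rfl⟩⟩
  exact ⟨fun t => (g t).1, fun t => D (g t).1, fun t => (hD _ (g t).2).1, hg⟩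

namespace IsLeftSeparated

variable {T : Type u} [LinearOrder T] {k : ℕ} {g : T → X} {C : T → ℕ → Set X}

theorem injective (hg : IsLeftSeparated k g C) : Function.Injective g :=
  Function.Injective.of_lt_imp_ne fun s t hst hgst =>
    hg.2 s t hst (hgst ▸ subset_closure ((hg.1 s).mem le_rfl))

theorem sEvenDiscrete_image_of_notMem (hg : IsLeftSeparated k g C) {H : Set T}
    (hH : ∀ s ∈ H, ∀ t ∈ H, s < t → g s ∉ closure (C t (k - 1))) :
    SEvenDiscrete k (g '' H) := by
  rintro _ ⟨t, ht, rfl⟩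
  refine ⟨C t (k - 1), (hg.1 t).sOpenNhd (by omega), subset_antisymm ?_
    (singleton_subset_iff.mpr ⟨subset_closure ((hg.1 t).mem (by omega)), t, ht, rfl⟩)⟩
  rintro _ ⟨hw, s, hs, rfl⟩
  rcases lt_trichotomy s t with hst | rfl | hts
  · exact (hH s hs t ht hst hw).elim
  · rfl
  · exact (hg.2 t s hts (closure_mono ((hg.1 t).mono (by omega) le_rfl) hw)).elim

theorem sEvenDiscrete_image_of_mem (hg : IsLeftSeparated k g C) (hk : 1 ≤ k) {H D : Set T}
    (hH : ∀ s ∈ H, ∀ t ∈ H, s < t → g s ∈ closure (C t (k - 1))) (hDH : D ⊆ H)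
    (hpred : ∀ q ∈ D, ∃ p ∈ H, p < q ∧ ∀ r ∈ H, r < q → r ≤ p) :
    SEvenDiscrete k (g '' D) := by
  rintro _ ⟨q, hq, rfl⟩
  obtain ⟨p, hp, hpq, hmax⟩ := hpred q hq
  have hchain := (hg.1 q).inter_compl_closure (hg.1 p) (hg.2 p q hpq)
  have hnhd := hchain.sOpenNhd (k := k) (by omega)
  have hmem := hchain.mem (show k - 1 ≤ 2 * k - 1 by omega)
  rw [show 2 * k - 1 - (k - 1) = k by omega] at hnhd hmem
  refine ⟨_, hnhd, subset_antisymm ?_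
    (singleton_subset_iff.mpr ⟨subset_closure hmem, q, hq, rfl⟩)⟩
  rintro _ ⟨hw, s, hs, rfl⟩
  rcases lt_trichotomy s q with hsq | rfl | hqs
  · -- every earlier point of `H` lies in `C p k`, which the closure of the neighbourhood avoids
    have hsp : g s ∈ C p k := by
      rcases (hmax s (hDH hs) hsq).lt_or_eq with hsp | rfl
      · simpa [show k - 1 + 1 = k by omega] using
          (hg.1 p).2.2 (k - 1) (by omega) (hH s (hDH hs) p hp hsp)
      · exact (hg.1 s).mem (by omega)
    exact ((hg.1 p).1 k (by omega)).closure_compl_closure_subset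
      (closure_mono inter_subset_right hw) hsp |>.elim
  · rfl
  · exact (hg.2 q s hqs (closure_mono
      (inter_subset_left.trans ((hg.1 q).mono (by omega) le_rfl)) hw)).elim

theorem exists_sEvenDiscrete_lt_mk [WellFoundedLT T] (hg : IsLeftSeparated k g C) (hk : 1 ≤ k)
    {κ : Cardinal.{u}} (hκ : ℵ₀ ≤ κ) (hT : 2 ^ κ < #T) :
    ∃ E : Set X, SEvenDiscrete k E ∧ κ < #E := by
  classical
  obtain ⟨v, H, hHκ, hH⟩ := exists_pairwise_eq_of_two_power_lt hκ hT
    (fun s t => decide (g (min s t) ∈ closure (C (max s t) (k - 1))))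
    fun s t => by rw [min_comm, max_comm]
  have hcol : ∀ s ∈ H, ∀ t ∈ H, s < t → (g s ∈ closure (C t (k - 1)) ↔ v = true) :=
    fun s hs t ht hst => by
      simpa [min_eq_left hst.le, max_eq_right hst.le] using congrArg (· = true) (hH hs ht hst.ne)
  cases v
  · exact ⟨g '' H, hg.sEvenDiscrete_image_of_notMem fun s hs t ht hst => by
      simpa using hcol s hs t ht hst, (mk_image_eq hg.injective).symm ▸ hHκ⟩
  · obtain ⟨D, hDH, hDκ, hpred⟩ := exists_lt_mk_subset_forall_exists_pred hκ hHκ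
    exact ⟨g '' D, hg.sEvenDiscrete_image_of_mem hk (fun s hs t ht hst =>
      (hcol s hs t ht hst).mpr rfl) hDH hpred, (mk_image_eq hg.injective).symm ▸ hDκ⟩

end IsLeftSeparated

theorem mk_le_spreadEven {k : ℕ} {E : Set X} (hE : SEvenDiscrete k E) : #E ≤ spreadEven k X :=
  (le_ciSup bddAbove_of_small (⟨E, hE⟩ : {E : Set X // SEvenDiscrete k E})).trans le_sup_left

end SSeparation

theorem stmt14 (k : ℕ) (hk : 1 ≤ k) (X : Type u) [TopologicalSpace X]
    (h : SSpace (2 * k) X) :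
    psi X ≤ 2 ^ spreadEven k X := by
  set κ := spreadEven k X
  have hκ : ℵ₀ ≤ κ := le_sup_right
  refine csInf_le' ⟨hκ.trans (cantor κ).le, fun x => ?_⟩
  by_contra! hx
  obtain ⟨g, C, hg⟩ := h.exists_isLeftSeparated hk hx (T := (succ ((2 : Cardinal) ^ κ)).ord.ToType)
    fun t => lt_succ_iff.mp (by simpa using mk_Iio_lt t)
  obtain ⟨E, hE, hEκ⟩ := hg.exists_sEvenDiscrete_lt_mk hk hκ (by simp)
  exact (mk_le_spreadEven hE).not_gt hEκ
end

section
/- Let k be a positive integer. For every S(3k-1)-space X, ψ_{2k-1}(X) ≤ 2^{s_{2k}(X)} and ψ_{2k}(X) ≤ 2^{s_{2k-1}(X)}. -/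
open Cardinal Set

universe u

variable {X : Type u}

/-! Fix `p`. Separating each `y ≠ p` from `p` by a chain of `3k-1` open sets gives, from its lower
third, an open S(2k-1)-neighbourhood `V y` of `y` and, from the complements of the closures of its
upper third, one `G y` of `p` that misses even the θ-closure of `V y`. Along a well-ordering of `X`,
pick `y` whenever it lies neither in the θ-closure of the points picked before nor in an earlier
`V z`. The picked set `D` is discrete, so `|D| ≤ s`, and every `z ≠ p` either lies in some `V y`
with `y ∈ D`, and is excluded by `G y`, or lies in the θ-closure of `V z ∩ D`, and is excluded by a
neighbourhood of `p` chosen for that subset of `D`. These `|D| + 2^|D| ≤ 2^s` neighbourhoods of `p`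
intersect in `{p}`. -/

theorem exists_set_mem_iff_of_wellFounded {α : Type*} (r : α → α → Prop) [IsWellFounded α r]
    (P : Set α → α → Prop) : ∃ D : Set α, ∀ y, y ∈ D ↔ P {z ∈ D | r z y} y := by
  refine ⟨{y | IsWellFounded.fix r (fun y ih => P {z | ∃ h : r z y, ih z h} y) y}, fun y => ?_⟩
  rw [mem_ofPred_eq, IsWellFounded.fix_eq]
  simp only [exists_prop, and_comm, mem_ofPred_eq]

theorem exists_and_imp_of_exists {α : Type*} {P Q : α → Prop} (h : ∃ a, P a) :
    ∃ a, P a ∧ ((∃ b, P b ∧ Q b) → Q a) := by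
  by_cases hQ : ∃ b, P b ∧ Q b
  · obtain ⟨b, hPb, hQb⟩ := hQ
    exact ⟨b, hPb, fun _ => hQb⟩
  · obtain ⟨a, hPa⟩ := h
    exact ⟨a, hPa, fun h' => absurd h' hQ⟩

theorem Cardinal.mk_image_union_image_powerset_le {α β : Type u} {D : Set α} (f : α → β)
    (g : Set α → β) {s : Cardinal.{u}} (hs : ℵ₀ ≤ s) (hD : #D ≤ s) :
    #(f '' D ∪ g '' 𝒫 D : Set β) ≤ 2 ^ s := by
  have hpow : (2 : Cardinal) ^ #D ≤ 2 ^ s := Cardinal.power_le_power_left two_ne_zero hD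
  refine (mk_union_le _ _).trans (add_le_of_le (hs.trans (cantor s).le) ?_ ?_)
  · exact mk_image_le.trans (hD.trans (cantor s).le)
  · exact mk_image_le.trans ((mk_powerset D).trans_le hpow)

section SOpenNhd

variable [TopologicalSpace X] {k : ℕ}

lemma SOpenNhd.mem {x : X} {U : Set X} (hU : SOpenNhd k x U) : x ∈ U := by
  obtain ⟨-, V, -, hx, hV, hVU⟩ := hU
  have : ∀ i ≤ k - 1, x ∈ V i := by
    intro i hi
    induction i with
    | zero => exact hx
    | succ i ih => exact subset_closure.trans (hV i (by omega)) (ih (by omega))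
  exact hVU (this (k - 1) le_rfl)

lemma SOpenNhd.inter {x : X} {U U' : Set X} (hU : SOpenNhd k x U) (hU' : SOpenNhd k x U') :
    SOpenNhd k x (U ∩ U') := by
  obtain ⟨hUo, V, hVo, hx, hV, hVU⟩ := hU
  obtain ⟨hUo', V', hVo', hx', hV', hVU'⟩ := hU'
  refine ⟨hUo.inter hUo', fun i => V i ∩ V' i, fun i hi => (hVo i hi).inter (hVo' i hi),
    ⟨hx, hx'⟩, fun i hi => ?_, inter_subset_inter hVU hVU'⟩
  exact (closure_inter_subset_inter_closure _ _).trans (inter_subset_inter (hV i hi) (hV' i hi))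

lemma SOpenNhd.univ (x : X) : SOpenNhd k x univ :=
  ⟨isOpen_univ, fun _ => Set.univ, fun _ _ => isOpen_univ, mem_univ x, fun _ _ => subset_univ _,
    subset_univ _⟩

end SOpenNhd

section ThetaBy

variable [TopologicalSpace X] {k : ℕ} {c : Set X → Set X}

/-- The odd and even notions differ only in whether the neighbourhood is closed up:
`thetaBy id k = thetaOdd k` and `thetaBy closure k = thetaEven k` by `rfl`, and likewise for
`SDiscreteBy`. -/
def thetaBy (c : Set X → Set X) (k : ℕ) (A : Set X) : Set X :=
  {x | ∀ U : Set X, SOpenNhd k x U → (c U ∩ A).Nonempty}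

def SDiscreteBy (c : Set X → Set X) (k : ℕ) (D : Set X) : Prop :=
  ∀ x ∈ D, ∃ U : Set X, SOpenNhd k x U ∧ c U ∩ D = {x}

lemma notMem_thetaBy {A : Set X} {x : X} :
    x ∉ thetaBy c k A ↔ ∃ U, SOpenNhd k x U ∧ c U ∩ A = ∅ := by
  simp [thetaBy, not_nonempty_iff_eq_empty]

lemma thetaBy_mono {A B : Set X} (hAB : A ⊆ B) : thetaBy c k A ⊆ thetaBy c k B :=
  fun _ hx U hU => (hx U hU).mono (inter_subset_inter_right _ hAB)

lemma subset_thetaBy (hc_ext : ∀ A, A ⊆ c A) {A : Set X} : A ⊆ thetaBy c k A :=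
  fun x hx U hU => ⟨x, hc_ext U hU.mem, hx⟩

lemma mem_thetaBy_inter (hc : Monotone c) {A V : Set X} {x : X} (hx : x ∈ thetaBy c k A)
    (hV : SOpenNhd k x V) : x ∈ thetaBy c k (c V ∩ A) := by
  intro U hU
  obtain ⟨w, hwU, hwA⟩ := hx _ (hU.inter hV)
  exact ⟨w, hc inter_subset_left hwU, hc inter_subset_right hwU, hwA⟩

lemma SDiscreteBy.of_trichotomous (hc : Monotone c) (hc_ext : ∀ A, A ⊆ c A)
    {r : X → X → Prop} [Std.Trichotomous r] {V : X → Set X} {D : Set X}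
    (hV : ∀ y ∈ D, SOpenNhd k y (V y))
    (hD : ∀ y ∈ D, y ∉ thetaBy c k {z ∈ D | r z y} ∧ ∀ z ∈ {z ∈ D | r z y}, y ∉ c (V z)) :
    SDiscreteBy c k D := by
  intro y hy
  obtain ⟨N, hN, hND⟩ := notMem_thetaBy.1 (hD y hy).1
  refine ⟨N ∩ V y, hN.inter (hV y hy), eq_singleton_iff_unique_mem.2
    ⟨⟨hc_ext _ ⟨hN.mem, (hV y hy).mem⟩, hy⟩, ?_⟩⟩
  rintro z ⟨hzc, hzD⟩
  rcases trichotomous_of r z y with hzy | rfl | hyz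
  · exact absurd hND (nonempty_iff_ne_empty.1 ⟨z, hc inter_subset_left hzc, hzD, hzy⟩)
  · rfl
  · exact absurd (hc inter_subset_right hzc) ((hD z hzD).2 y ⟨hy, hyz⟩)

theorem exists_sOpenNhds_biInter_eq_singleton {c' : Set X → Set X} (hc : Monotone c)
    (hc_ext : ∀ A, A ⊆ c A) (hc'_ext : ∀ A, A ⊆ c' A) {s : Cardinal.{u}} (hs : ℵ₀ ≤ s)
    (hspread : ∀ D, SDiscreteBy c k D → #D ≤ s) {p : X} {V G : X → Set X}
    (hV : ∀ y, y ≠ p → SOpenNhd k y (V y)) (hG : ∀ y, y ≠ p → SOpenNhd k p (G y))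
    (hVG : ∀ y, y ≠ p → thetaBy c k (c (V y)) ∩ c' (G y) = ∅) :
    ∃ B : Set (Set X), #B ≤ 2 ^ s ∧ (∀ U ∈ B, SOpenNhd k p U) ∧ ⋂ U ∈ B, c' U = {p} := by
  obtain ⟨D, hD⟩ := exists_set_mem_iff_of_wellFounded (WellOrderingRel : X → X → Prop)
    fun A y => y ≠ p ∧ y ∉ thetaBy c k A ∧ ∀ z ∈ A, y ∉ c (V z)
  have hDp : ∀ y ∈ D, y ≠ p := fun y hy => ((hD y).1 hy).1
  have hdisc : SDiscreteBy c k D := SDiscreteBy.of_trichotomous hc hc_ext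
    (fun y hy => hV y (hDp y hy)) fun y hy => ((hD y).1 hy).2
  have hcover : ∀ z, z ≠ p → z ∈ thetaBy c k D ∨ ∃ y ∈ D, z ∈ c (V y) := by
    intro z hz
    by_contra! h
    exact h.1 (subset_thetaBy hc_ext ((hD z).2
      ⟨hz, fun hθ => h.1 (thetaBy_mono (sep_subset _ _) hθ), fun y hy => h.2 y hy.1⟩))
  choose H hHp hHmin using fun S : Set X => exists_and_imp_of_exists
    (Q := fun H => thetaBy c k S ∩ c' H = ∅) ⟨univ, SOpenNhd.univ p⟩
  have hBp : ∀ U ∈ G '' D ∪ H '' 𝒫 D, SOpenNhd k p U := by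
    rintro U (⟨y, hy, rfl⟩ | ⟨S, -, rfl⟩)
    exacts [hG y (hDp y hy), hHp S]
  refine ⟨G '' D ∪ H '' 𝒫 D, Cardinal.mk_image_union_image_powerset_le G H hs (hspread D hdisc),
    hBp, Subset.antisymm (fun z hz => ?_) ?_⟩
  · rw [mem_iInter₂] at hz
    by_contra hzp
    rcases hcover z hzp with hθ | ⟨y, hy, hzy⟩
    · have hSG : thetaBy c k (c (V z) ∩ D) ∩ c' (G z) = ∅ := subset_eq_empty
        (inter_subset_inter_left _ (thetaBy_mono inter_subset_left)) (hVG z hzp)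
      exact (hHmin _ ⟨_, hG z hzp, hSG⟩).subset
        ⟨mem_thetaBy_inter hc hθ (hV z hzp), hz _ (Or.inr ⟨_, inter_subset_right, rfl⟩)⟩
    · exact (hVG y (hDp y hy)).subset ⟨subset_thetaBy hc_ext hzy, hz _ (Or.inl ⟨y, hy, rfl⟩)⟩
  · rw [singleton_subset_iff, mem_iInter₂]
    exact fun U hU => hc'_ext U (hBp U hU).mem

end ThetaBy

section SChain

variable [TopologicalSpace X] {m k : ℕ} {W : ℕ → Set X}

def SChain (m : ℕ) (W : ℕ → Set X) : Prop :=
  (∀ i ≤ m, IsOpen (W i)) ∧ ∀ i < m, closure (W i) ⊆ W (i + 1)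

lemma SChain.subset_of_le (hW : SChain m W) {i j : ℕ} (hij : i ≤ j) (hj : j ≤ m) : W i ⊆ W j := by
  induction j, hij using Nat.le_induction with
  | base => exact subset_rfl
  | succ j _ ih => exact (ih (by omega)).trans (subset_closure.trans (hW.2 j (by omega)))

lemma SChain.closure_subset (hW : SChain m W) {i j : ℕ} (hij : i < j) (hj : j ≤ m) :
    closure (W i) ⊆ W j :=
  (hW.2 i (by omega)).trans (hW.subset_of_le hij hj)

lemma SChain.closure_compl_closure_subset (hW : SChain m W) {i : ℕ} (hi : i ≤ m) :
    closure (closure (W i))ᶜ ⊆ (W i)ᶜ :=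
  closure_minimal (compl_subset_compl.2 subset_closure) (hW.1 i hi).isClosed_compl

lemma SChain.sOpenNhd (hW : SChain m W) (hkm : k - 1 ≤ m) {x : X} (hx : x ∈ W 0) :
    SOpenNhd k x (W (k - 1)) :=
  ⟨hW.1 _ hkm, W, fun i hi => hW.1 i (by omega), hx, fun i hi => hW.2 i (by omega), subset_rfl⟩

lemma SChain.sOpenNhd_compl_closure (hW : SChain m W) {i j : ℕ} (hij : i + (k - 1) = j)
    (hj : j ≤ m) {x : X} (hx : x ∉ closure (W j)) : SOpenNhd k x (closure (W i))ᶜ := by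
  refine ⟨isClosed_closure.isOpen_compl, fun l => (closure (W (j - l)))ᶜ,
    fun _ _ => isClosed_closure.isOpen_compl, by simpa using hx, fun l hl => ?_, ?_⟩
  · refine (hW.closure_compl_closure_subset (by omega)).trans (compl_subset_compl.2 ?_)
    rw [show j - l = j - (l + 1) + 1 by omega]
    exact hW.2 _ (by omega)
  · show (closure (W (j - (k - 1))))ᶜ ⊆ _
    rw [show j - (k - 1) = i by omega]

lemma SChain.thetaEven_closure_inter_compl_closure (hk : 1 ≤ k) (hW : SChain m W)
    (hm : 2 * k - 1 ≤ m) : thetaEven k (closure (W (k - 1))) ∩ (closure (W (2 * k - 1)))ᶜ = ∅ := by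
  refine eq_empty_of_forall_notMem fun w ⟨hwθ, hwG⟩ => ?_
  obtain ⟨v, hvN, hvV⟩ := hwθ _ (hW.sOpenNhd_compl_closure (i := k) (by omega) hm hwG)
  exact hW.closure_compl_closure_subset (by omega) hvN (hW.closure_subset (by omega) (by omega) hvV)

lemma SChain.thetaOdd_inter_closure_compl_closure (hk : 1 ≤ k) (hW : SChain m W)
    (hm : 2 * k - 1 ≤ m) : thetaOdd k (W (k - 1)) ∩ closure (closure (W (2 * k - 1)))ᶜ = ∅ := by
  refine eq_empty_of_forall_notMem fun w ⟨hwθ, hwG⟩ => ?_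
  have hw : w ∉ closure (W (2 * k - 2)) := fun hw =>
    hW.closure_compl_closure_subset hm hwG (hW.closure_subset (by omega) hm hw)
  obtain ⟨v, hvN, hvV⟩ := hwθ _ (hW.sOpenNhd_compl_closure (i := k - 1) (by omega) (by omega) hw)
  exact hvN (subset_closure hvV)

lemma SSpace.exists_sChain (h : SSpace (m + 1) X) {y p : X} (hyp : y ≠ p) :
    ∃ W : ℕ → Set X, SChain m W ∧ y ∈ W 0 ∧ p ∉ closure (W m) := by
  obtain ⟨W, hWo, hy, hW, hWp⟩ := h y p hyp
  exact ⟨W, ⟨hWo, hW⟩, hy, fun hp => (hWp.subset ⟨hp, rfl⟩ :)⟩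

lemma SSpace.exists_separating_sOpenNhds (hk : 1 ≤ k) (h : SSpace (3 * k - 1) X) {y p : X}
    (hyp : y ≠ p) : ∃ V G : Set X, SOpenNhd k y V ∧ SOpenNhd k p G ∧
      thetaEven k (closure V) ∩ G = ∅ ∧ thetaOdd k V ∩ closure G = ∅ := by
  rw [show 3 * k - 1 = 3 * k - 2 + 1 by omega] at h
  obtain ⟨W, hW, hy, hp⟩ := h.exists_sChain hyp
  exact ⟨W (k - 1), (closure (W (2 * k - 1)))ᶜ, hW.sOpenNhd (by omega) hy,
    hW.sOpenNhd_compl_closure (by omega) le_rfl hp,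
    hW.thetaEven_closure_inter_compl_closure hk (by omega),
    hW.thetaOdd_inter_closure_compl_closure hk (by omega)⟩

end SChain

lemma le_spreadEven [TopologicalSpace X] {k : ℕ} {D : Set X} (hD : SEvenDiscrete k D) :
    #D ≤ spreadEven k X :=
  (le_ciSup Cardinal.bddAbove_of_small (⟨D, hD⟩ : {D : Set X // SEvenDiscrete k D})).trans
    le_sup_left

lemma le_spreadOdd [TopologicalSpace X] {k : ℕ} {D : Set X} (hD : SOddDiscrete k D) :
    #D ≤ spreadOdd k X :=
  (le_ciSup Cardinal.bddAbove_of_small (⟨D, hD⟩ : {D : Set X // SOddDiscrete k D})).trans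
    le_sup_left

theorem stmt18 (k : ℕ) (hk : 1 ≤ k) (X : Type u) [TopologicalSpace X]
    (h : SSpace (3 * k - 1) X) :
    psiOdd k X ≤ 2 ^ spreadEven k X ∧ psiEven k X ≤ 2 ^ spreadOdd k X := by
  have hsep (p : X) := fun y (hyp : y ≠ p) => h.exists_separating_sOpenNhds hk hyp
  constructor
  · refine csInf_le' ⟨le_sup_right.trans (cantor _).le, fun p => ?_⟩
    choose! V G hV hG hVG _ using hsep p
    obtain ⟨B, hB, hBp, hBi⟩ := exists_sOpenNhds_biInter_eq_singleton (monotone_closure X)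
      (fun _ => subset_closure) (fun _ => subset_rfl) le_sup_right (fun _ => le_spreadEven)
      hV hG hVG
    exact ⟨B, hB, hBp, sInter_eq_biInter.trans hBi⟩
  · refine csInf_le' ⟨le_sup_right.trans (cantor _).le, fun p => ?_⟩
    choose! V G hV hG _ hVG using hsep p
    exact exists_sOpenNhds_biInter_eq_singleton monotone_id (fun _ => subset_rfl)
      (fun _ => subset_closure) le_sup_right (fun _ => le_spreadOdd) hV hG hVG
end
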